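/- Let k ≥ 2 be an integer, let ε ∈ (0, 1/2) be real, let n ≥ 2 be an even natural number, and let t be a real number with t ≥ max{3^{k−1}, n²/ε}. Define t_ℓ = 3^{ℓ−1} for 1 ≤ ℓ ≤ k−1 and t_k = t. Then: (a) for all indices 1 ≤ ℓ₁ ≤ ℓ₂ < ℓ₃ ≤ k one has t_{ℓ₃} > t_{ℓ₁} + t_{ℓ₂} + 2ε; (b) the n-point set P = {(0,ν) : ν = 1,…,n/2} ∪ {(t,ν) : ν = 1,…,n/2} ⊂ ℝ² is separated; and (c) the number of unordered pairs {p,q} of distinct points of P whose Euclidean distance lies in ⋃_{ℓ=1}^k [t_ℓ, t_ℓ+ε] is at least n²/4 + (k−1)·n − 3^k. -/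
import Mathlib


/-- The number of unordered pairs `{p, q}` of distinct points of the finite set `P ⊂ ℝ²`
whose Euclidean distance lies in the set `S ⊆ ℝ`. -/
noncomputable def nearPairs (P : Finset (EuclideanSpace ℝ (Fin 2))) (S : Set ℝ) : ℕ :=
  Set.ncard {e : Sym2 (EuclideanSpace ℝ (Fin 2)) |
    ¬ e.IsDiag ∧ (∀ p ∈ e, p ∈ P) ∧
      Sym2.lift ⟨fun p q => dist p q, fun _ _ => dist_comm _ _⟩ e ∈ S}

open scoped Classical

/-- The point `(x, y) ∈ ℝ²` as an element of `EuclideanSpace ℝ (Fin 2)`. -/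
noncomputable def pt (x y : ℝ) : EuclideanSpace ℝ (Fin 2) :=
  (WithLp.equiv 2 (Fin 2 → ℝ)).symm ![x, y]

lemma pt_inj {a b c d : ℝ} (h : pt a b = pt c d) : a = c ∧ b = d := by
  have h' := (WithLp.equiv 2 (Fin 2 → ℝ)).symm.injective h
  exact ⟨congrFun h' 0, congrFun h' 1⟩

lemma dist_pt (a b c d : ℝ) : dist (pt a b) (pt c d) = Real.sqrt ((a-c)^2 + (b-d)^2) := by
  simp [EuclideanSpace.dist_eq, pt, Fin.sum_univ_two, Real.dist_eq, sq_abs]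

lemma dist_pt_same (x a b : ℝ) : dist (pt x a) (pt x b) = |a - b| := by
  simp [dist_pt, Real.sqrt_sq_eq_abs]

lemma nat_dist_ge {a b : ℕ} (h : a ≠ b) : 1 ≤ |(a:ℝ) - b| := by
  rcases lt_or_gt_of_ne h with h | h
  · have h1 : (a:ℝ) + 1 ≤ b := by exact_mod_cast h
    calc (1:ℝ) ≤ (b:ℝ) - a := by linarith
      _ ≤ |(b:ℝ) - a| := le_abs_self _
      _ = |(a:ℝ) - b| := abs_sub_comm _ _
  · have h1 : (b:ℝ) + 1 ≤ a := by exact_mod_cast h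
    calc (1:ℝ) ≤ (a:ℝ) - b := by linarith
      _ ≤ |(a:ℝ) - b| := le_abs_self _

lemma cross_mem {t ε a b : ℝ} (ht0 : 0 ≤ t) (hε : 0 ≤ ε) (h : (a-b)^2 ≤ 2*t*ε + ε^2) :
    dist (pt 0 a) (pt t b) ∈ Set.Icc t (t+ε) := by
  rw [dist_pt]
  constructor
  · calc t = Real.sqrt (t^2) := (Real.sqrt_sq ht0).symm
      _ ≤ _ := Real.sqrt_le_sqrt (by nlinarith [sq_nonneg (a-b)])
  · calc Real.sqrt ((0-t)^2 + (a-b)^2) ≤ Real.sqrt ((t+ε)^2) :=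
        Real.sqrt_le_sqrt (by nlinarith)
      _ = t + ε := Real.sqrt_sq (by linarith)

lemma cast_sub_ge (m n : ℕ) : (m:ℝ) - n ≤ ((m - n : ℕ) : ℝ) := by
  rcases le_or_gt n m with h | h
  · rw [Nat.cast_sub h]
  · have h0 : m - n = 0 := by omega
    have h2 : (m:ℝ) ≤ n := Nat.cast_le.mpr h.le
    rw [h0]; push_cast; linarith

set_option maxHeartbeats 1000000 in
theorem sharpness_example (k : ℕ) (hk : 2 ≤ k) (ε : ℝ) (hε : ε ∈ Set.Ioo (0:ℝ) (1/2))
    (n : ℕ) (hn : 2 ≤ n) (hneven : Even n)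
    (t : ℝ) (ht : max ((3:ℝ) ^ (k - 1)) ((n : ℝ)^2 / ε) ≤ t)
    (tseq : Fin k → ℝ)
    (htseq : ∀ l : Fin k, tseq l = if (l : ℕ) = k - 1 then t else (3:ℝ) ^ (l : ℕ))
    (P : Finset (EuclideanSpace ℝ (Fin 2)))
    (hP : P = ((Finset.Icc 1 (n / 2)).image fun ν : ℕ => pt 0 (ν : ℝ)) ∪
              ((Finset.Icc 1 (n / 2)).image fun ν : ℕ => pt t (ν : ℝ))) :
    -- (a) the separation condition on the `tseq l` holds:
    (∀ l₁ l₂ l₃ : Fin k, l₁ ≤ l₂ → l₂ < l₃ →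
        tseq l₁ + tseq l₂ + 2 * ε < tseq l₃) ∧
    -- (b) `P` is an `n`-point separated set:
    P.card = n ∧
    (∀ p ∈ P, ∀ q ∈ P, p ≠ q → 1 ≤ dist p q) ∧
    -- (c) the number of near-equal-distance pairs is large:
    (n : ℝ)^2 / 4 + ((k : ℝ) - 1) * n - 3 ^ k ≤
      (nearPairs P (⋃ l : Fin k, Set.Icc (tseq l) (tseq l + ε)) : ℕ) := by
  obtain ⟨hε0, hε2⟩ := hε
  have ht1 : (3:ℝ) ^ (k - 1) ≤ t := le_trans (le_max_left _ _) ht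
  have ht2 : (n:ℝ)^2 / ε ≤ t := le_trans (le_max_right _ _) ht
  have h3k1 : (1:ℝ) ≤ 3 ^ (k-1) := one_le_pow₀ (by norm_num)
  have ht0 : (1:ℝ) ≤ t := le_trans h3k1 ht1
  have htne : (0:ℝ) ≠ t := by linarith
  set m : ℕ := n / 2 with hmdef
  have hn2 : n = 2 * m := by
    obtain ⟨r, hr⟩ := hneven; omega
  have hm1 : 1 ≤ m := by omega
  -- part (a)
  have parta : ∀ l₁ l₂ l₃ : Fin k, l₁ ≤ l₂ → l₂ < l₃ →
      tseq l₁ + tseq l₂ + 2 * ε < tseq l₃ := by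
    intro l₁ l₂ l₃ h12 h23
    have h12' : (l₁:ℕ) ≤ l₂ := h12
    have h23' : (l₂:ℕ) < l₃ := h23
    have hl3 : (l₃:ℕ) ≤ k - 1 := by omega
    have hl2 : (l₂:ℕ) ≠ k - 1 := by omega
    have hl1 : (l₁:ℕ) ≠ k - 1 := by omega
    rw [htseq l₁, htseq l₂, htseq l₃, if_neg hl1, if_neg hl2]
    have hx1 : (3:ℝ) ^ (l₁:ℕ) ≤ 3 ^ (l₂:ℕ) := pow_le_pow_right₀ (by norm_num) h12'
    have hx2 : (3:ℝ) ^ ((l₂:ℕ)+1) ≤ 3 ^ (k-1) :=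
      pow_le_pow_right₀ (by norm_num) (by omega)
    have hx3 : (3:ℝ) ^ ((l₂:ℕ)+1) = 3 * 3 ^ (l₂:ℕ) := by ring
    have hx4 : (1:ℝ) ≤ 3 ^ (l₂:ℕ) := one_le_pow₀ (by norm_num)
    by_cases h : (l₃:ℕ) = k - 1
    · rw [if_pos h]
      nlinarith
    · rw [if_neg h]
      have hx5 : (3:ℝ) ^ ((l₂:ℕ)+1) ≤ 3 ^ (l₃:ℕ) :=
        pow_le_pow_right₀ (by norm_num) (by omega)
      nlinarith
  have hptinj0 : ∀ x : ℝ, Function.Injective (fun ν : ℕ => pt x (ν : ℝ)) := by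
    intro x a b h
    exact_mod_cast (pt_inj h).2
  have hmemP : ∀ (b : Bool) (i : ℕ), 1 ≤ i → i ≤ m → pt (cond b t 0) (i:ℝ) ∈ P := by
    intro b i h1 h2
    rw [hP]
    cases b
    · exact Finset.mem_union_left _ (Finset.mem_image.mpr ⟨i, Finset.mem_Icc.mpr ⟨h1, h2⟩, rfl⟩)
    · exact Finset.mem_union_right _ (Finset.mem_image.mpr ⟨i, Finset.mem_Icc.mpr ⟨h1, h2⟩, rfl⟩)
  -- part (b) : card
  have hdisj : Disjoint ((Finset.Icc 1 m).image fun ν : ℕ => pt 0 (ν : ℝ))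
      ((Finset.Icc 1 m).image fun ν : ℕ => pt t (ν : ℝ)) := by
    rw [Finset.disjoint_left]
    rintro p hp hq
    obtain ⟨a, -, ha⟩ := Finset.mem_image.mp hp
    obtain ⟨b, -, hb⟩ := Finset.mem_image.mp hq
    exact htne (pt_inj (ha.trans hb.symm)).1
  have hcard : P.card = n := by
    rw [hP, Finset.card_union_of_disjoint hdisj,
      Finset.card_image_of_injective _ (hptinj0 0),
      Finset.card_image_of_injective _ (hptinj0 t), Nat.card_Icc]
    omega
  -- part (b) : separation
  have hsep : ∀ p ∈ P, ∀ q ∈ P, p ≠ q → 1 ≤ dist p q := by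
    have key : ∀ (x y : ℝ) (a b : ℕ), (x = 0 ∨ x = t) → (y = 0 ∨ y = t) →
        pt x (a:ℝ) ≠ pt y (b:ℝ) → 1 ≤ dist (pt x (a:ℝ)) (pt y (b:ℝ)) := by
      intro x y a b hx hy hne
      by_cases hxy : x = y
      · subst hxy
        rw [dist_pt_same]
        have hab : a ≠ b := by
          intro h; exact hne (by rw [h])
        exact nat_dist_ge hab
      · rw [dist_pt]
        have hsq : (x - y)^2 = t^2 := by
          rcases hx with hx | hx <;> rcases hy with hy | hy <;> subst hx <;> subst hy <;>
            first | (exact absurd rfl hxy) | ring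
        calc (1:ℝ) ≤ t := ht0
          _ = Real.sqrt (t^2) := (Real.sqrt_sq (by linarith)).symm
          _ ≤ _ := Real.sqrt_le_sqrt (by rw [hsq]; nlinarith [sq_nonneg ((a:ℝ) - b)])
    intro p hp q hq hne
    rw [hP] at hp hq
    simp only [Finset.mem_union, Finset.mem_image] at hp hq
    rcases hp with ⟨a, -, ha⟩ | ⟨a, -, ha⟩ <;> rcases hq with ⟨b, -, hb⟩ | ⟨b, -, hb⟩ <;>
      subst ha <;> subst hb
    · exact key 0 0 a b (Or.inl rfl) (Or.inl rfl) hne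
    · exact key 0 t a b (Or.inl rfl) (Or.inr rfl) hne
    · exact key t 0 a b (Or.inr rfl) (Or.inl rfl) hne
    · exact key t t a b (Or.inr rfl) (Or.inr rfl) hne
  refine ⟨parta, hcard, hsep, ?_⟩
  -- part (c)
  set S : Set ℝ := ⋃ l : Fin k, Set.Icc (tseq l) (tseq l + ε) with hS
  set T : Set (Sym2 (EuclideanSpace ℝ (Fin 2))) :=
    {e | ¬ e.IsDiag ∧ (∀ p ∈ e, p ∈ P) ∧
      Sym2.lift ⟨fun p q => dist p q, fun _ _ => dist_comm _ _⟩ e ∈ S} with hT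
  have hnp : nearPairs P S = T.ncard := rfl
  have hTfin : T.Finite := by
    apply Set.Finite.subset P.sym2.finite_toSet
    intro e he
    rw [Finset.mem_coe, Finset.mem_sym2_iff]
    exact he.2.1
  -- the cross pairs
  set fA : ℕ × ℕ → Sym2 (EuclideanSpace ℝ (Fin 2)) :=
    fun p => s(pt 0 (p.1:ℝ), pt t (p.2:ℝ)) with hfA
  set A : Finset (Sym2 (EuclideanSpace ℝ (Fin 2))) :=
    (Finset.Icc 1 m ×ˢ Finset.Icc 1 m).image fA with hA
  have hfAinj : Function.Injective fA := by
    rintro ⟨a, b⟩ ⟨c, d⟩ h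
    simp only [hfA, Sym2.eq_iff] at h
    rcases h with ⟨h1, h2⟩ | ⟨h1, h2⟩
    · have e1 : a = c := by exact_mod_cast (pt_inj h1).2
      have e2 : b = d := by exact_mod_cast (pt_inj h2).2
      subst e1; subst e2; rfl
    · exact absurd (pt_inj h1).1 htne
  have hAcard : A.card = m * m := by
    rw [hA, Finset.card_image_of_injective _ hfAinj, Finset.card_product, Nat.card_Icc]
    simp
  -- the same-column pairs
  set g : (Σ _ : ℕ, ℕ × Bool) → Sym2 (EuclideanSpace ℝ (Fin 2)) :=
    fun q => s(pt (cond q.2.2 t 0) (q.2.1:ℝ), pt (cond q.2.2 t 0) ((q.2.1 + 3^q.1 : ℕ):ℝ)) with hg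
  set J : Finset (Σ _ : ℕ, ℕ × Bool) :=
    (Finset.range (k-1)).sigma (fun l => (Finset.Icc 1 (m - 3^l)) ×ˢ (Finset.univ : Finset Bool))
    with hJ
  set B : Finset (Sym2 (EuclideanSpace ℝ (Fin 2))) := J.image g with hB
  have hcond : ∀ b b' : Bool, (cond b t 0 : ℝ) = cond b' t 0 → b = b' := by
    intro b b' h
    cases b <;> cases b'
    · rfl
    · exact absurd h htne
    · exact absurd h.symm htne
    · rfl
  have hginj : Function.Injective g := by
    rintro ⟨l, i, b⟩ ⟨l', i', b'⟩ h
    simp only [hg, Sym2.eq_iff] at h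
    have h31 : 1 ≤ 3^l := Nat.one_le_pow _ _ (by norm_num)
    have h31' : 1 ≤ 3^l' := Nat.one_le_pow _ _ (by norm_num)
    rcases h with ⟨h1, h2⟩ | ⟨h1, h2⟩
    · obtain ⟨hc1, hi1⟩ := pt_inj h1
      obtain ⟨-, hi2⟩ := pt_inj h2
      have e1 : i = i' := by exact_mod_cast hi1
      have e2 : i + 3^l = i' + 3^l' := by exact_mod_cast hi2
      have e3 : (3:ℕ)^l = 3^l' := by omega
      have e4 : l = l' := Nat.pow_right_injective (by norm_num) e3
      have e5 : b = b' := hcond _ _ hc1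
      subst e1; subst e4; subst e5; rfl
    · obtain ⟨-, hi1⟩ := pt_inj h1
      obtain ⟨-, hi2⟩ := pt_inj h2
      have e1 : i = i' + 3^l' := by exact_mod_cast hi1
      have e2 : i + 3^l = i' := by exact_mod_cast hi2
      omega
  have hBcard : B.card = ∑ l ∈ Finset.range (k-1), (m - 3^l) * 2 := by
    rw [hB, Finset.card_image_of_injective _ hginj, hJ, Finset.card_sigma]
    refine Finset.sum_congr rfl fun l _ => ?_
    rw [Finset.card_product, Nat.card_Icc, Finset.card_univ]
    simp
  -- disjointness of A and B
  have hABdisj : Disjoint A B := by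
    rw [Finset.disjoint_left]
    rintro e heA heB
    obtain ⟨⟨a, c⟩, -, hae⟩ := Finset.mem_image.mp heA
    obtain ⟨⟨l, i, b⟩, -, hbe⟩ := Finset.mem_image.mp heB
    have h := hae.trans hbe.symm
    simp only [hfA, hg, Sym2.eq_iff] at h
    rcases h with ⟨h1, h2⟩ | ⟨h1, h2⟩ <;>
      exact htne ((pt_inj h1).1.trans (pt_inj h2).1.symm)
  -- every element of A ∪ B is in T
  have hsub : ↑(A ∪ B) ⊆ T := by
    intro e he
    rw [Finset.coe_union] at he
    rcases he with heA | heB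
    · obtain ⟨⟨a, c⟩, hmem, hae⟩ := Finset.mem_image.mp heA
      rw [Finset.mem_product, Finset.mem_Icc, Finset.mem_Icc] at hmem
      obtain ⟨⟨ha1, ha2⟩, hc1, hc2⟩ := hmem
      subst hae
      refine ⟨?_, ?_, ?_⟩
      · rw [Sym2.mk_isDiag_iff]
        intro h
        exact htne (pt_inj h).1
      · intro p hp
        rcases Sym2.mem_iff.mp hp with h | h <;> subst h
        · exact hmemP false a ha1 ha2
        · exact hmemP true c hc1 hc2
      · rw [Sym2.lift_mk]
        apply Set.mem_iUnion.mpr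
        refine ⟨⟨k-1, by omega⟩, ?_⟩
        rw [htseq, if_pos rfl]
        apply cross_mem (by linarith) (by linarith)
        have hna' : a ≤ n := by omega
        have hnc' : c ≤ n := by omega
        have hna : (a:ℝ) ≤ n := by exact_mod_cast hna'
        have hnc : (c:ℝ) ≤ n := by exact_mod_cast hnc'
        have ha0 : (1:ℝ) ≤ (a:ℝ) := by exact_mod_cast ha1
        have hc0 : (1:ℝ) ≤ (c:ℝ) := by exact_mod_cast hc1
        have htε : (n:ℝ)^2 ≤ t * ε := (div_le_iff₀ hε0).mp ht2
        nlinarith [mul_nonneg (by linarith : (0:ℝ) ≤ (n:ℝ) - a) (by linarith : (0:ℝ) ≤ (n:ℝ) - c),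
          mul_nonneg (by linarith : (0:ℝ) ≤ (a:ℝ)) (by linarith : (0:ℝ) ≤ (c:ℝ)),
          mul_le_mul_of_nonneg_left hna (by linarith : (0:ℝ) ≤ (a:ℝ)),
          mul_le_mul_of_nonneg_left hnc (by linarith : (0:ℝ) ≤ (c:ℝ)),
          sq_nonneg ε]
    · obtain ⟨⟨l, i, b⟩, hmem, hbe⟩ := Finset.mem_image.mp heB
      rw [hJ, Finset.mem_sigma, Finset.mem_product, Finset.mem_Icc] at hmem
      dsimp only at hmem
      obtain ⟨hlk, ⟨hi1, hi2⟩, -⟩ := hmem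
      rw [Finset.mem_range] at hlk
      have h31 : 1 ≤ 3^l := Nat.one_le_pow _ _ (by norm_num)
      have hile : i + 3^l ≤ m := by omega
      subst hbe
      refine ⟨?_, ?_, ?_⟩
      · rw [Sym2.mk_isDiag_iff]
        intro h
        have h' := (pt_inj h).2
        have h'' : i = i + 3^l := by exact_mod_cast h'
        omega
      · intro p hp
        rcases Sym2.mem_iff.mp hp with h | h <;> subst h
        · exact hmemP b i hi1 (by omega)
        · exact hmemP b (i + 3^l) (by omega) hile
      · rw [Sym2.lift_mk]
        apply Set.mem_iUnion.mpr
        refine ⟨⟨l, by omega⟩, ?_⟩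
        have hval : ((⟨l, by omega⟩ : Fin k) : ℕ) = l := rfl
        rw [htseq, hval, if_neg (by omega)]
        show dist (pt (bif b then t else 0) (i:ℝ)) (pt (bif b then t else 0) ((i + 3^l : ℕ):ℝ)) ∈
          Set.Icc ((3:ℝ)^l) ((3:ℝ)^l + ε)
        rw [dist_pt_same]
        have habs : |(i:ℝ) - ((i + 3^l : ℕ):ℝ)| = (3:ℝ)^l := by
          have hd : (i:ℝ) - ((i + 3^l : ℕ):ℝ) = -((3:ℝ)^l) := by push_cast; ring
          rw [hd, abs_neg, abs_of_nonneg (by positivity)]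
        rw [habs]
        exact Set.mem_Icc.mpr ⟨le_rfl, by linarith⟩
  -- counting
  have h1 : (A ∪ B).card ≤ nearPairs P S := by
    have h2 : (↑(A ∪ B) : Set (Sym2 (EuclideanSpace ℝ (Fin 2)))).ncard ≤ T.ncard :=
      Set.ncard_le_ncard hsub hTfin
    rw [Set.ncard_coe_finset] at h2
    rw [hnp]
    exact h2
  have hcards : (A ∪ B).card = m*m + ∑ l ∈ Finset.range (k-1), (m - 3^l) * 2 := by
    rw [Finset.card_union_of_disjoint hABdisj, hAcard, hBcard]
  -- final arithmetic
  have hsum1 : ∑ l ∈ Finset.range (k-1), ((m:ℝ) - 3^l) * 2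
      ≤ ∑ l ∈ Finset.range (k-1), ((m - 3^l : ℕ):ℝ) * 2 := by
    refine Finset.sum_le_sum fun l _ => ?_
    have hc := cast_sub_ge m (3^l)
    have hc3 : ((3^l : ℕ):ℝ) = (3:ℝ)^l := by push_cast; ring
    rw [hc3] at hc
    linarith
  have hgeo : ∑ l ∈ Finset.range (k-1), (3:ℝ)^l = (3^(k-1) - 1)/2 := by
    rw [geom_sum_eq (by norm_num)]
    norm_num
  have hsum2 : ∑ l ∈ Finset.range (k-1), ((m:ℝ) - 3^l) * 2
      = ((k-1 : ℕ):ℝ) * m * 2 - (3^(k-1) - 1) := by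
    rw [← Finset.sum_mul, Finset.sum_sub_distrib, Finset.sum_const, Finset.card_range, hgeo]
    ring
  have hk1 : ((k-1 : ℕ):ℝ) = (k:ℝ) - 1 := by
    rw [Nat.cast_sub (by omega)]; norm_num
  have h3 : (3:ℝ)^(k-1) ≤ 3^k := pow_le_pow_right₀ (by norm_num) (by omega)
  have hnr : (n:ℝ) = 2*m := by exact_mod_cast hn2
  have hcast : ((A ∪ B).card : ℝ) = (m:ℝ)*m + ∑ l ∈ Finset.range (k-1), ((m - 3^l : ℕ):ℝ) * 2 := by
    rw [hcards]; push_cast; ring_nf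
  have hfin : ((A ∪ B).card : ℝ) ≤ (nearPairs P S : ℝ) := by exact_mod_cast h1
  rw [hk1] at hsum2
  calc (n : ℝ)^2 / 4 + ((k : ℝ) - 1) * n - 3 ^ k
      ≤ (m:ℝ)*m + (((k:ℝ)-1) * m * 2 - (3^(k-1) - 1)) := by rw [hnr]; nlinarith [hk, (by exact_mod_cast hk : (2:ℝ) ≤ k)]
    _ = (m:ℝ)*m + ∑ l ∈ Finset.range (k-1), ((m:ℝ) - 3^l) * 2 := by rw [hsum2]
    _ ≤ (m:ℝ)*m + ∑ l ∈ Finset.range (k-1), ((m - 3^l : ℕ):ℝ) * 2 := by linarith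
    _ = ((A ∪ B).card : ℝ) := hcast.symm
    _ ≤ _ := hfin
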